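/- arXiv:math/0102030 — 5 statements merged into one kernel-verified Lean document; each statement's English description precedes it below -/
import Mathlib

section
/- There exists a constant c > 0 depending only on n such that for every real r ≥ 1, g(rB^n) ≤ c · r^{n/(n−1)}; that is, all lattice points of the ball of radius r can be covered by at most c · r^{n/(n−1)} proper linear subspaces of ℝ^n. -/
open scoped BigOperators
open Pointwise Metric

noncomputable section

/-- `ℝ^n` with the Euclidean structure. -/
abbrev Euc (n : ℕ) := EuclideanSpace ℝ (Fin n)

/-- A point of `ℝ^n` is a lattice point if all its coordinates are integers. -/
def IsLatticePoint {n : ℕ} (x : Euc n) : Prop := ∀ i, ∃ m : ℤ, x i = (m : ℝ)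

/-- A compact convex body, symmetric about the origin, with nonempty interior. -/
def IsSymmConvexBody {n : ℕ} (C : Set (Euc n)) : Prop :=
  IsCompact C ∧ Convex ℝ C ∧ (∀ x ∈ C, -x ∈ C) ∧ (interior C).Nonempty

/-- `IsSuccMin C i l` means `l` is the `i`-th successive minimum of `C` w.r.t. `ℤ^n`:
the least `t > 0` such that `t • C` contains `i` linearly independent lattice points. -/
def IsSuccMin {n : ℕ} (C : Set (Euc n)) (i : ℕ) (l : ℝ) : Prop :=
  IsLeast {t : ℝ | 0 < t ∧ ∃ v : Fin i → Euc n, LinearIndependent ℝ v ∧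
    ∀ j, IsLatticePoint (v j) ∧ v j ∈ t • C} l

/-- A finite set of points in `ℝ^n` is in general position if no `n` of its elements
are linearly dependent. -/
def InGenPos {n : ℕ} (S : Finset (Euc n)) : Prop :=
  ∀ T ⊆ S, T.card = n →
    LinearIndependent ℝ (fun x : (T : Set (Euc n)) => (x : Euc n))

/-- `h(C)`: the maximum cardinality of a subset of `C ∩ ℤ^n` in general position. -/
def maxGenPos {n : ℕ} (C : Set (Euc n)) : ℕ :=
  sSup {k : ℕ | ∃ S : Finset (Euc n), S.card = k ∧ ↑S ⊆ C ∧
    (∀ x ∈ S, IsLatticePoint x) ∧ InGenPos S}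

/-- `g(C)`: the minimum number of proper linear subspaces covering `C ∩ ℤ^n`. -/
def coverNum {n : ℕ} (C : Set (Euc n)) : ℕ :=
  sInf {k : ℕ | ∃ F : Finset (Submodule ℝ (Euc n)), F.card = k ∧
    (∀ H ∈ F, H ≠ ⊤) ∧ ∀ x ∈ C, IsLatticePoint x → ∃ H ∈ F, x ∈ H}

namespace CoverAux

/-- The linear functional `x ↦ ∑ aᵢ xᵢ`. -/
def phi (n : ℕ) (a : Fin n → ℤ) : Euc n →ₗ[ℝ] ℝ where
  toFun x := ∑ i, (a i : ℝ) * x i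
  map_add' x y := by
    simp [mul_add, Finset.sum_add_distrib]
  map_smul' c x := by
    simp only [PiLp.smul_apply, smul_eq_mul, RingHom.id_apply, Finset.mul_sum]
    exact Finset.sum_congr rfl fun i _ => by ring

lemma phi_apply (n : ℕ) (a : Fin n → ℤ) (x : Euc n) :
    phi n a x = ∑ i, (a i : ℝ) * x i := rfl

lemma phi_ne_zero {n : ℕ} {a : Fin n → ℤ} (ha : a ≠ 0) : phi n a ≠ 0 := by
  obtain ⟨i, hi⟩ := Function.ne_iff.mp ha
  intro h
  have h2 : phi n a (EuclideanSpace.single i 1) = 0 := by rw [h]; rfl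
  rw [phi_apply] at h2
  simp only [EuclideanSpace.single_apply, mul_ite, mul_one, mul_zero,
    Finset.sum_ite_eq' Finset.univ i, Finset.mem_univ, if_true] at h2
  exact hi (by exact_mod_cast h2)

/-- Pigeonhole: a short integer vector orthogonal to `y`. -/
lemma exists_orth {n : ℕ} (hn : 2 ≤ n) (y : Fin n → ℤ) (M : ℕ) (hM : 1 ≤ M)
    (hR : ∑ i, |y i| ≤ (M : ℤ) ^ (n - 1)) :
    ∃ a : Fin n → ℤ, a ≠ 0 ∧ (∀ i, |a i| ≤ (M : ℤ)) ∧ ∑ i, a i * y i = 0 := by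
  obtain ⟨k, rfl⟩ : ∃ k, n = k + 2 := ⟨n - 2, by omega⟩
  set s : Finset (Fin (k + 2) → ℤ) :=
    Fintype.piFinset fun _ => Finset.Icc (0 : ℤ) (M : ℤ) with hs
  set lo : ℤ := ∑ i, (M : ℤ) * min (y i) 0 with hlo
  set hi : ℤ := ∑ i, (M : ℤ) * max (y i) 0 with hhi
  set t : Finset ℤ := Finset.Icc lo hi with ht
  have hlohi : hi - lo = (M : ℤ) * ∑ i, |y i| := by
    rw [hlo, hhi, ← Finset.sum_sub_distrib, Finset.mul_sum]
    refine Finset.sum_congr rfl fun i _ => ?_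
    rw [← mul_sub]
    congr 1
    have := max_sub_min_eq_abs (y i) 0
    simpa using this
  have hscard : s.card = (M + 1) ^ (k + 2) := by
    rw [hs, Fintype.card_piFinset]
    simp [Int.card_Icc]
  have htcard : t.card < s.card := by
    rw [ht, Int.card_Icc, hscard]
    rcases le_or_gt (hi + 1 - lo) 0 with h | h
    · rw [Int.toNat_of_nonpos h]; positivity
    · rw [Int.toNat_lt h.le]
      have hR' : (M : ℤ) * ∑ i, |y i| ≤ (M : ℤ) ^ (k + 2) := by
        calc (M : ℤ) * ∑ i, |y i| ≤ (M : ℤ) * (M : ℤ) ^ (k + 1) := by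
              apply mul_le_mul_of_nonneg_left _ (by positivity)
              simpa using hR
          _ = (M : ℤ) ^ (k + 2) := by ring
      have hMk : (1 : ℤ) ≤ (M : ℤ) ^ k := one_le_pow₀ (by exact_mod_cast hM)
      have hpow : ((M : ℤ)) ^ k ≤ ((M : ℤ) + 1) ^ k :=
        pow_le_pow_left₀ (by positivity) (by linarith) k
      have hM1 : (1 : ℤ) ≤ (M : ℤ) := by exact_mod_cast hM
      have key : (M : ℤ) ^ (k + 2) + 2 ≤ ((M : ℤ) + 1) ^ (k + 2) := by
        have e1 : ((M : ℤ) + 1) ^ (k + 2) = ((M : ℤ) + 1) ^ k * ((M : ℤ) + 1) ^ 2 := by ring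
        have e2 : ((M : ℤ)) ^ (k + 2) = ((M : ℤ)) ^ k * ((M : ℤ)) ^ 2 := by ring
        rw [e1, e2]
        nlinarith [hMk, hM1, hpow]
      have : hi + 1 - lo = (M : ℤ) * ∑ i, |y i| + 1 := by omega
      rw [this]
      push_cast
      linarith
  have hmaps : ∀ a ∈ s, (∑ i, a i * y i) ∈ t := by
    intro a ha
    rw [ht, Finset.mem_Icc]
    have hai : ∀ i, 0 ≤ a i ∧ a i ≤ (M : ℤ) := by
      intro i
      have := Fintype.mem_piFinset.mp ha i
      exact Finset.mem_Icc.mp this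
    constructor
    · refine Finset.sum_le_sum fun i _ => ?_
      obtain ⟨h0, h1⟩ := hai i
      rcases le_total 0 (y i) with h | h
      · have : min (y i) 0 = 0 := min_eq_right h
        rw [this]; nlinarith
      · have : min (y i) 0 = y i := min_eq_left h
        rw [this]; nlinarith
    · refine Finset.sum_le_sum fun i _ => ?_
      obtain ⟨h0, h1⟩ := hai i
      rcases le_total 0 (y i) with h | h
      · have : max (y i) 0 = y i := max_eq_left h
        rw [this]; nlinarith
      · have : max (y i) 0 = 0 := max_eq_right h
        rw [this]; nlinarith
  obtain ⟨b, hb, c, hc, hbc, heq⟩ :=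
    Finset.exists_ne_map_eq_of_card_lt_of_maps_to htcard hmaps
  refine ⟨b - c, sub_ne_zero.mpr hbc, ?_, ?_⟩
  · intro i
    have hbi := Finset.mem_Icc.mp (Fintype.mem_piFinset.mp hb i)
    have hci := Finset.mem_Icc.mp (Fintype.mem_piFinset.mp hc i)
    simp only [Pi.sub_apply]
    exact abs_le.mpr ⟨by omega, by omega⟩
  · simp only [Pi.sub_apply, sub_mul, Finset.sum_sub_distrib]
    omega

lemma abs_coord_le {n : ℕ} (x : Euc n) (i : Fin n) : |x i| ≤ ‖x‖ := by
  rw [EuclideanSpace.norm_eq, ← Real.sqrt_sq_eq_abs]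
  apply Real.sqrt_le_sqrt
  have : (x i) ^ 2 = ‖x i‖ ^ 2 := by rw [Real.norm_eq_abs, sq_abs]
  rw [this]
  exact Finset.single_le_sum (f := fun j => ‖x j‖ ^ 2) (fun j _ => by positivity) (Finset.mem_univ i)

lemma coverNum_le_of_M {n : ℕ} (hn : 2 ≤ n) (r : ℝ) (hr : 1 ≤ r) (M : ℕ) (hM : 1 ≤ M)
    (hMpow : (n : ℝ) * r ≤ (M : ℝ) ^ (n - 1)) :
    coverNum (Metric.closedBall (0 : Euc n) r) ≤ (2 * M + 1) ^ n := by
  classical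
  set A : Finset (Fin n → ℤ) :=
    (Fintype.piFinset fun _ => Finset.Icc (-(M : ℤ)) (M : ℤ)).erase 0 with hA
  set F : Finset (Submodule ℝ (Euc n)) := A.image fun a => LinearMap.ker (phi n a) with hF
  have hmem : coverNum (Metric.closedBall (0 : Euc n) r) ≤ F.card := by
    apply Nat.sInf_le
    refine ⟨F, rfl, ?_, ?_⟩
    · intro H hH
      obtain ⟨a, haA, rfl⟩ := Finset.mem_image.mp hH
      have ha0 : a ≠ 0 := (Finset.mem_erase.mp haA).1
      rw [Ne, LinearMap.ker_eq_top]
      exact phi_ne_zero ha0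
    · intro x hx hlat
      choose y hy using hlat
      have hxr : ‖x‖ ≤ r := by simpa using mem_closedBall_zero_iff.mp hx
      have hyR : (∑ i, |y i|) ≤ (M : ℤ) ^ (n - 1) := by
        have h1 : ((∑ i, |y i| : ℤ) : ℝ) ≤ (n : ℝ) * r := by
          push_cast
          calc ∑ i, |(y i : ℝ)| ≤ ∑ _i : Fin n, r := by
                refine Finset.sum_le_sum fun i _ => ?_
                rw [← hy i]
                exact (abs_coord_le x i).trans hxr
            _ = (n : ℝ) * r := by simp [mul_comm]
        have h2 : ((∑ i, |y i| : ℤ) : ℝ) ≤ ((M : ℝ)) ^ (n - 1) := h1.trans hMpow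
        exact_mod_cast h2
      obtain ⟨a, ha0, haM, hao⟩ := exists_orth hn y M hM hyR
      refine ⟨LinearMap.ker (phi n a), Finset.mem_image_of_mem _ ?_, ?_⟩
      · rw [hA, Finset.mem_erase]
        refine ⟨ha0, Fintype.mem_piFinset.mpr fun i => Finset.mem_Icc.mpr ?_⟩
        have := abs_le.mp (haM i)
        exact this
      · rw [LinearMap.mem_ker, phi_apply]
        have : ∑ i, (a i : ℝ) * x i = ((∑ i, a i * y i : ℤ) : ℝ) := by
          push_cast
          exact Finset.sum_congr rfl fun i _ => by rw [hy i]
        rw [this, hao]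
        simp
  refine hmem.trans ?_
  calc F.card ≤ A.card := Finset.card_image_le
    _ ≤ (Fintype.piFinset fun _ : Fin n => Finset.Icc (-(M : ℤ)) (M : ℤ)).card :=
        Finset.card_le_card (Finset.erase_subset _ _)
    _ = (2 * M + 1) ^ n := by
        rw [Fintype.card_piFinset]
        have : (Finset.Icc (-(M : ℤ)) (M : ℤ)).card = 2 * M + 1 := by
          rw [Int.card_Icc]; omega
        simp [this]


end CoverAux

open CoverAux in
/-- There is `c > 0` depending only on `n` such that for all `r ≥ 1`
the lattice points of the ball of radius `r` can be covered by at most `c·r^{n/(n-1)}`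
proper linear subspaces. -/
theorem cover_lattice_points_of_ball_upper (n : ℕ) (hn : 2 ≤ n) :
    ∃ c : ℝ, 0 < c ∧ ∀ r : ℝ, 1 ≤ r →
      (coverNum (Metric.closedBall (0 : Euc n) r) : ℝ) ≤
        c * r ^ ((n : ℝ) / ((n : ℝ) - 1)) := by
  have hn1 : (1 : ℝ) ≤ (n : ℝ) - 1 := by
    have : (2 : ℝ) ≤ (n : ℝ) := by exact_mod_cast hn
    linarith
  have hn0 : (0 : ℝ) < (n : ℝ) - 1 := by linarith
  refine ⟨5 ^ n * (n : ℝ) ^ ((n : ℝ) / ((n : ℝ) - 1)), by positivity, ?_⟩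
  intro r hr
  set e : ℝ := 1 / ((n : ℝ) - 1) with he
  have he0 : 0 < e := by positivity
  have hnr1 : (1 : ℝ) ≤ (n : ℝ) * r := by
    have h2 : (2 : ℝ) ≤ (n : ℝ) := by exact_mod_cast hn
    nlinarith
  have hnr0 : (0 : ℝ) ≤ (n : ℝ) * r := by linarith
  set B : ℝ := ((n : ℝ) * r) ^ e with hB
  have hB1 : 1 ≤ B := Real.one_le_rpow hnr1 he0.le
  have hB0 : 0 ≤ B := by linarith
  set M : ℕ := ⌈B⌉₊ with hM
  have hM1 : 1 ≤ M := Nat.one_le_ceil_iff.mpr (by linarith)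
  have hBM : B ≤ (M : ℝ) := Nat.le_ceil B
  have hMB : (M : ℝ) ≤ B + 1 := (Nat.ceil_lt_add_one hB0).le
  -- B ^ (n-1) = n * r
  have hcast : ((n - 1 : ℕ) : ℝ) = (n : ℝ) - 1 := by
    have : 1 ≤ n := by omega
    push_cast [this]
    ring
  have hBpow : B ^ (n - 1) = (n : ℝ) * r := by
    rw [← Real.rpow_natCast B (n - 1), hcast, hB, ← Real.rpow_mul hnr0]
    rw [he]
    rw [one_div_mul_cancel (ne_of_gt hn0), Real.rpow_one]
  have hMpow : (n : ℝ) * r ≤ (M : ℝ) ^ (n - 1) := by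
    rw [← hBpow]
    exact pow_le_pow_left₀ hB0 hBM _
  have hcover := coverNum_le_of_M hn r hr M hM1 hMpow
  have step1 : (coverNum (Metric.closedBall (0 : Euc n) r) : ℝ) ≤ ((2 * M + 1 : ℕ) : ℝ) ^ n := by
    exact_mod_cast Nat.cast_le.mpr hcover
  refine step1.trans ?_
  have h5B : ((2 * M + 1 : ℕ) : ℝ) ≤ 5 * B := by
    push_cast
    linarith
  have hBn : B ^ n = ((n : ℝ) * r) ^ ((n : ℝ) / ((n : ℝ) - 1)) := by
    rw [hB, ← Real.rpow_natCast (((n : ℝ) * r) ^ e) n, ← Real.rpow_mul hnr0]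
    congr 1
    rw [he]
    field_simp
  calc ((2 * M + 1 : ℕ) : ℝ) ^ n ≤ (5 * B) ^ n := pow_le_pow_left₀ (by positivity) h5B n
    _ = 5 ^ n * B ^ n := mul_pow _ _ _
    _ = 5 ^ n * ((n : ℝ) ^ ((n : ℝ) / ((n : ℝ) - 1)) * r ^ ((n : ℝ) / ((n : ℝ) - 1))) := by
        rw [hBn, Real.mul_rpow (by positivity) (by linarith)]
    _ = 5 ^ n * (n : ℝ) ^ ((n : ℝ) / ((n : ℝ) - 1)) * r ^ ((n : ℝ) / ((n : ℝ) - 1)) := by ring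
end
end

section
/- For every real x > 1, the box C_x = [−x, x]^{n−1} × [−1, 1] ⊆ ℝ^n satisfies g(C_x) ≥ 2x and h(C_x) ≥ x/2. -/
open scoped BigOperators
open Pointwise Metric

noncomputable section

/-- The box `C_x = [-x,x]^{n-1} × [-1,1] ⊆ ℝ^n`. -/
def boxBody (n : ℕ) (x : ℝ) : Set (Euc n) :=
  {y | ∀ i : Fin n, |y i| ≤ if (i : ℕ) < n - 1 then x else 1}

/-!
Let `N = ⌊x⌋`. Among the lattice points of `C_x` are the layers
`L_e = ([-N, N] ∩ ℤ)^{n-1} × {e}` for `e = 0, 1`, each with `(2N+1)^{n-1}` points. A proper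
subspace meeting `L₁` has a normal vector with a nonzero coordinate among the first `n - 1`, so
it meets each boxLayer in at most `(2N+1)^{n-2}` points. Hence at least `2N+1` subspaces of a cover
meet `L₁`, and `2N+1` such subspaces hold at most `(2N+1)((2N+1)^{n-2} - 1)` nonzero points of
`L₀`, too few; so `g(C_x) ≥ 2N+2 > 2x`.

For `h`, Bertrand's postulate gives a prime `p` with `x/2 < p ≤ x+1`. The points
`(k, k², …, k^{n-1}, 1)` reduced mod `p`, `0 ≤ k < p`, lie in `C_x`, and any `n` of them form
modulo `p` a Vandermonde matrix with permuted columns, so they are linearly independent.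
-/

open Finset Module

section Grid

variable {ι R : Type*} [Fintype ι] [DecidableEq ι] [CommRing R] [IsDomain R]

theorem eq_of_dotProduct_eq_of_eq_off {c a b : ι → R} {i₀ : ι} (hc : c i₀ ≠ 0)
    (hab : c ⬝ᵥ a = c ⬝ᵥ b) (hoff : ∀ i ≠ i₀, a i = b i) : a = b := by
  have hsub : a - b = Pi.single i₀ (a i₀ - b i₀) := by
    ext i
    rcases eq_or_ne i i₀ with rfl | hi
    · simp
    · simp [hi, hoff i hi]
  rw [← sub_eq_zero, ← dotProduct_sub, hsub, dotProduct_single, mul_eq_zero, sub_eq_zero] at hab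
  funext i
  rcases eq_or_ne i i₀ with rfl | hi
  · exact hab.resolve_left hc
  · exact hoff i hi

theorem card_filter_dotProduct_eq_zero_mul_card_le [DecidableEq R] (S : ι → Finset R)
    {c : ι → R} {i₀ : ι} (hc : c i₀ ≠ 0) :
    #{a ∈ Fintype.piFinset S | c ⬝ᵥ a = 0} * #(S i₀) ≤ ∏ i, #(S i) := by
  rw [← card_product, ← Fintype.card_piFinset]
  refine card_le_card_of_injOn (fun p => Function.update p.1 i₀ p.2) ?_ ?_
  · rintro ⟨a, t⟩ hat
    rw [mem_coe, mem_product, mem_filter, Fintype.mem_piFinset] at hat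
    refine Fintype.mem_piFinset.mpr fun i => ?_
    rcases eq_or_ne i i₀ with rfl | hi
    · simpa using hat.2
    · simpa [hi] using hat.1.1 i
  · rintro ⟨a, t⟩ hat ⟨b, s⟩ hbs hab
    rw [mem_coe, mem_product, mem_filter] at hat hbs
    have hts : t = s := by simpa using congrFun hab i₀
    have hab' : a = b := eq_of_dotProduct_eq_of_eq_off hc (hat.1.2.trans hbs.1.2.symm)
      fun i hi => by simpa [hi] using congrFun hab i
    rw [hab', hts]

end Grid

def intGrid (N : ℕ) : Finset ℝ := (Icc (-N : ℤ) N).image Int.cast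

theorem card_intGrid (N : ℕ) : #(intGrid N) = 2 * N + 1 := by
  rw [intGrid, card_image_of_injective _ Int.cast_injective, Int.card_Icc]; omega

def boxLayer (n N : ℕ) (e : ℤ) : Finset (Fin n → ℝ) :=
  Fintype.piFinset fun i => if (i : ℕ) < n - 1 then intGrid N else {(e : ℝ)}

theorem card_boxLayer {n : ℕ} (hn : 1 ≤ n) (N : ℕ) (e : ℤ) :
    #(boxLayer n N e) = (2 * N + 1) ^ (n - 1) := by
  obtain ⟨m, rfl⟩ : ∃ m, n = m + 1 := ⟨n - 1, by omega⟩
  simp [boxLayer, Fintype.card_piFinset, Fin.prod_univ_castSucc, card_intGrid, apply_ite]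

theorem zero_mem_boxLayer_zero (n N : ℕ) : (0 : Fin n → ℝ) ∈ boxLayer n N 0 := by
  simp only [boxLayer, Fintype.mem_piFinset]
  intro i
  split_ifs
  · exact mem_image.mpr ⟨0, by simp, Int.cast_zero⟩
  · simp

theorem isLatticePoint_toLp_of_mem_boxLayer {n N : ℕ} {e : ℤ} {a : Fin n → ℝ}
    (ha : a ∈ boxLayer n N e) : IsLatticePoint (WithLp.toLp 2 a) := by
  intro i
  have := Fintype.mem_piFinset.mp ha i
  split_ifs at this
  · obtain ⟨m, -, hm⟩ := mem_image.mp this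
    exact ⟨m, hm.symm⟩
  · exact ⟨e, mem_singleton.mp this⟩

theorem toLp_mem_boxBody_of_mem_boxLayer {n N : ℕ} {x : ℝ} {e : ℤ} (hNx : (N : ℝ) ≤ x)
    (he : |e| ≤ 1) {a : Fin n → ℝ} (ha : a ∈ boxLayer n N e) : WithLp.toLp 2 a ∈ boxBody n x := by
  intro i
  have := Fintype.mem_piFinset.mp ha i
  split_ifs at this ⊢
  · obtain ⟨m, hm, ham⟩ := mem_image.mp this
    rw [mem_Icc] at hm
    rw [PiLp.toLp_apply, ← ham]
    have h1 : (-N : ℝ) ≤ m := by exact_mod_cast hm.1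
    have h2 : (m : ℝ) ≤ N := by exact_mod_cast hm.2
    exact abs_le.mpr ⟨by linarith, by linarith⟩
  · rw [PiLp.toLp_apply, mem_singleton.mp this]
    simpa using (Int.cast_le (R := ℝ)).mpr he

theorem exists_coord_ne_zero_of_dotProduct_eq_zero {n N : ℕ} {e : ℤ} (he : e ≠ 0)
    {c a : Fin n → ℝ} (hc : c ≠ 0) (ha : a ∈ boxLayer n N e) (hca : c ⬝ᵥ a = 0) :
    ∃ i : Fin n, (i : ℕ) < n - 1 ∧ c i ≠ 0 := by
  by_contra! hlast
  refine hc (funext fun i => ?_)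
  by_cases hi : (i : ℕ) < n - 1
  · exact hlast i hi
  have hai : a i = e := by simpa [hi] using Fintype.mem_piFinset.mp ha i
  have hsingle : c ⬝ᵥ a = c i * a i := by
    refine Finset.sum_eq_single i (fun j _ hji => ?_) (by simp)
    have hj : (j : ℕ) < n - 1 := by
      by_contra hj
      exact hji (Fin.ext (by omega))
    simp [hlast j hj]
  rw [hsingle, hai, mul_eq_zero] at hca
  exact hca.resolve_right (by exact_mod_cast he)

open Classical in
theorem card_filter_boxLayer_mem_le {n : ℕ} (hn : 2 ≤ n) (N : ℕ) {H : Submodule ℝ (Euc n)}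
    (hH : H ≠ ⊤) (hmeet : ∃ a ∈ boxLayer n N 1, WithLp.toLp 2 a ∈ H) (e : ℤ) :
    #{a ∈ boxLayer n N e | WithLp.toLp 2 a ∈ H} ≤ (2 * N + 1) ^ (n - 2) := by
  obtain ⟨c, hcH, hc⟩ := (Submodule.ne_bot_iff Hᗮ).mp
    fun h => hH (Submodule.orthogonal_eq_bot_iff.mp h)
  have hperp : ∀ a : Fin n → ℝ, WithLp.toLp 2 a ∈ H → c.ofLp ⬝ᵥ a = 0 := fun a ha => by
    rw [dotProduct_comm]
    exact (Submodule.mem_orthogonal' H c).mp hcH _ ha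
  obtain ⟨a₁, ha₁, ha₁H⟩ := hmeet
  obtain ⟨i₀, hi₀, hci₀⟩ := exists_coord_ne_zero_of_dotProduct_eq_zero one_ne_zero
    (by simpa using hc) ha₁ (hperp a₁ ha₁H)
  have hgrid := card_filter_dotProduct_eq_zero_mul_card_le
    (fun i : Fin n => if (i : ℕ) < n - 1 then intGrid N else {(e : ℝ)}) hci₀
  rw [← Fintype.card_piFinset, ← boxLayer, card_boxLayer (by omega), if_pos hi₀, card_intGrid,
    show n - 1 = n - 2 + 1 by omega, pow_succ] at hgrid
  refine le_of_mul_le_mul_right (le_trans ?_ hgrid) (by omega : 0 < 2 * N + 1)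
  gcongr
  exact hperp _

open Classical in
theorem card_filter_erase_zero_boxLayer_zero_mem_le {n : ℕ} (hn : 2 ≤ n) (N : ℕ)
    {H : Submodule ℝ (Euc n)} (hH : H ≠ ⊤) (hmeet : ∃ a ∈ boxLayer n N 1, WithLp.toLp 2 a ∈ H) :
    #{a ∈ (boxLayer n N 0).erase 0 | WithLp.toLp 2 a ∈ H} ≤ (2 * N + 1) ^ (n - 2) - 1 := by
  rw [filter_erase, card_erase_of_mem (mem_filter.mpr ⟨zero_mem_boxLayer_zero n N, H.zero_mem⟩)]
  exact Nat.sub_le_sub_right (card_filter_boxLayer_mem_le hn N hH hmeet 0) 1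

theorem card_le_card_mul_of_covers {α β : Type*} {P : Finset α} {F : Finset β}
    {r : β → α → Prop} [∀ b, DecidablePred (r b)] {k : ℕ}
    (hcov : ∀ a ∈ P, ∃ b ∈ F, r b a) (hk : ∀ b ∈ F, #{a ∈ P | r b a} ≤ k) : #P ≤ #F * k := by
  classical
  refine (card_le_card fun a ha => ?_).trans (card_biUnion_le_card_mul F _ k hk)
  obtain ⟨b, hb, hba⟩ := hcov a ha
  exact mem_biUnion.mpr ⟨b, hb, mem_filter.mpr ⟨ha, hba⟩⟩

open Classical in
theorem two_mul_add_two_le_card_of_covers {n N : ℕ} (hn : 2 ≤ n) (hN : 1 ≤ N)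
    {F : Finset (Submodule ℝ (Euc n))} (hF : ∀ H ∈ F, H ≠ ⊤)
    (hcov : ∀ a ∈ boxLayer n N 1 ∪ (boxLayer n N 0).erase 0, ∃ H ∈ F, WithLp.toLp 2 a ∈ H) :
    2 * N + 2 ≤ #F := by
  set B := (2 * N + 1) ^ (n - 2)
  have hB : 0 < B := by positivity
  have hcard (e : ℤ) : #(boxLayer n N e) = (2 * N + 1) * B := by
    rw [card_boxLayer (by omega), show n - 1 = n - 2 + 1 by omega, pow_succ, mul_comm]
  set F₁ := F.filter fun H => ∃ a ∈ boxLayer n N 1, WithLp.toLp 2 a ∈ H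
  have hF₁ : 2 * N + 1 ≤ #F₁ := by
    have := card_le_card_mul_of_covers (P := boxLayer n N 1) (F := F₁) (k := B)
      (r := fun H a => WithLp.toLp 2 a ∈ H)
      (fun a ha => by
        obtain ⟨H, hH, haH⟩ := hcov a (mem_union_left _ ha)
        exact ⟨H, mem_filter.mpr ⟨hH, a, ha, haH⟩, haH⟩)
      (fun H hH => card_filter_boxLayer_mem_le hn N (hF H (mem_filter.mp hH).1)
        (mem_filter.mp hH).2 1)
    rw [hcard] at this
    exact le_of_mul_le_mul_right this hB
  by_contra! hFcard
  have hF₁F : F₁ = F := eq_of_subset_of_card_le (filter_subset _ _) (by omega)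
  have hlayer0 := card_le_card_mul_of_covers (P := (boxLayer n N 0).erase 0) (F := F) (k := B - 1)
    (r := fun H a => WithLp.toLp 2 a ∈ H) (fun a ha => hcov a (mem_union_right _ ha))
    fun H hH => card_filter_erase_zero_boxLayer_zero_mem_le hn N (hF H hH)
      (mem_filter.mp (hF₁F ▸ hH : H ∈ F₁)).2
  rw [card_erase_of_mem (zero_mem_boxLayer_zero n N), hcard] at hlayer0
  have := Nat.mul_le_mul_right (B - 1) (show #F ≤ 2 * N + 1 by omega)
  obtain ⟨B', hB'⟩ : ∃ B', B = B' + 1 := ⟨B - 1, by omega⟩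
  rw [hB', Nat.add_sub_cancel, mul_add, mul_one] at hlayer0
  rw [hB', Nat.add_sub_cancel] at this
  omega

theorem finite_setOf_isLatticePoint_abs_le (n : ℕ) (R : ℝ) :
    {y : Euc n | IsLatticePoint y ∧ ∀ i, |y i| ≤ R}.Finite := by
  refine ((Set.finite_Icc (fun _ : Fin n => -⌈R⌉) fun _ => ⌈R⌉).image
    fun m => WithLp.toLp 2 fun i => (m i : ℝ)).subset ?_
  rintro y ⟨hy, hR⟩
  choose m hm using hy
  have hmR (i : Fin n) : |m i| ≤ ⌈R⌉ := by
    have : ((|m i| : ℤ) : ℝ) ≤ ⌈R⌉ := by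
      rw [Int.cast_abs, ← hm i]
      exact (hR i).trans (Int.le_ceil R)
    exact_mod_cast this
  exact ⟨m, ⟨fun i => (abs_le.mp (hmR i)).1, fun i => (abs_le.mp (hmR i)).2⟩,
    by ext i; exact (hm i).symm⟩

theorem finite_setOf_mem_boxBody_isLatticePoint (n : ℕ) (x : ℝ) :
    {y | y ∈ boxBody n x ∧ IsLatticePoint y}.Finite :=
  (finite_setOf_isLatticePoint_abs_le n (max x 1)).subset fun y ⟨hy, hl⟩ =>
    ⟨hl, fun i => (hy i).trans (by split_ifs <;> simp)⟩

theorem exists_finset_ne_top_cover {K V : Type*} [Field K] [AddCommGroup V] [Module K V]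
    [FiniteDimensional K V] (hV : 1 < finrank K V) {s : Set V} (hs : s.Finite) :
    ∃ F : Finset (Submodule K V), (∀ H ∈ F, H ≠ ⊤) ∧ ∀ y ∈ s, ∃ H ∈ F, y ∈ H := by
  classical
  refine ⟨hs.toFinset.image (K ∙ ·), fun H hH => ?_, fun y hy =>
    ⟨K ∙ y, mem_image_of_mem _ (hs.mem_toFinset.mpr hy), Submodule.mem_span_singleton_self y⟩⟩
  obtain ⟨y, -, rfl⟩ := mem_image.mp hH
  intro htop
  have := finrank_span_le_card (R := K) ({y} : Set V)
  rw [htop, finrank_top] at this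
  simp only [Set.toFinset_singleton, card_singleton] at this
  omega

theorem Matrix.det_map_intCast_ne_zero_of_det_map_zmod_ne_zero {m R : Type*} [Fintype m]
    [DecidableEq m] [CommRing R] [CharZero R] {p : ℕ} (A : Matrix m m ℤ)
    (hA : (A.map (Int.cast : ℤ → ZMod p)).det ≠ 0) : (A.map (Int.cast : ℤ → R)).det ≠ 0 := by
  have h1 := (Int.castRingHom (ZMod p)).map_det A
  have h2 := (Int.castRingHom R).map_det A
  simp only [RingHom.mapMatrix_apply, Int.coe_castRingHom] at h1 h2
  rw [← h1] at hA
  rw [← h2, Int.cast_ne_zero]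
  rintro h
  simp [h] at hA

/-- `(k, k², …, k^{n-1}, 1)` reduced mod `p`: the exponent `(j + 1) % n` vanishes exactly at the
last coordinate. -/
def momentPointMod (n p k : ℕ) : Fin n → ℕ := fun j => k ^ (((j : ℕ) + 1) % n) % p

theorem momentPointMod_matrix_map_zmod (n p : ℕ) (κ : Fin n → ℕ) :
    (Matrix.of fun i j => (momentPointMod n p (κ i) j : ℤ)).map (Int.cast : ℤ → ZMod p) =
      (Matrix.vandermonde fun i => (κ i : ZMod p)).submatrix id (finRotate n) := by
  ext i j
  have := j.neZero
  simp [momentPointMod, Matrix.vandermonde, Fin.val_add, Nat.add_mod_mod]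

theorem linearIndependent_momentPointMod {n p : ℕ} [Fact p.Prime] {κ : Fin n → ℕ}
    (hκ : Function.Injective fun i => (κ i : ZMod p)) :
    LinearIndependent ℝ fun i => WithLp.toLp 2 fun j => (momentPointMod n p (κ i) j : ℝ) := by
  set A : Matrix (Fin n) (Fin n) ℤ := Matrix.of fun i j => (momentPointMod n p (κ i) j : ℤ)
  have hAp : (A.map (Int.cast : ℤ → ZMod p)).det ≠ 0 := by
    rw [momentPointMod_matrix_map_zmod, Matrix.det_permute']
    refine mul_ne_zero ?_ (Matrix.det_vandermonde_ne_zero_iff.mpr hκ)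
    rcases Int.units_eq_one_or (Equiv.Perm.sign (finRotate n)) with h | h <;> simp [h]
  have hrows := Matrix.linearIndependent_rows_of_det_ne_zero
    (A.det_map_intCast_ne_zero_of_det_map_zmod_ne_zero (R := ℝ) hAp)
  exact hrows.map' (WithLp.linearEquiv 2 ℝ (Fin n → ℝ)).symm.toLinearMap (LinearEquiv.ker _)

def momentCurveMod (n p : ℕ) : Finset (Euc n) :=
  (range p).image fun k => WithLp.toLp 2 fun j => (momentPointMod n p k j : ℝ)

theorem injOn_momentPointMod {n : ℕ} (hn : 2 ≤ n) (p : ℕ) :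
    Set.InjOn (fun k => WithLp.toLp 2 fun j => (momentPointMod n p k j : ℝ)) (range p) := by
  intro k hk l hl hkl
  have h0 := congrArg (fun y : Euc n => y ⟨0, by omega⟩) hkl
  simp only [momentPointMod, Nat.cast_inj] at h0
  rwa [Nat.mod_eq_of_lt (by omega : 1 < n), pow_one, pow_one, Nat.mod_eq_of_lt (mem_range.mp hk),
    Nat.mod_eq_of_lt (mem_range.mp hl)] at h0

theorem card_momentCurveMod {n : ℕ} (hn : 2 ≤ n) (p : ℕ) : #(momentCurveMod n p) = p := by
  rw [momentCurveMod, card_image_of_injOn (injOn_momentPointMod hn p), card_range]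

theorem momentCurveMod_subset_boxBody {n p : ℕ} {x : ℝ} (hp : 0 < p) (hpx : (p : ℝ) ≤ x + 1) :
    ↑(momentCurveMod n p) ⊆ boxBody n x := by
  intro y hy
  obtain ⟨k, -, rfl⟩ := mem_image.mp hy
  intro j
  simp only [Nat.abs_cast]
  split_ifs with hj
  · have : momentPointMod n p k j + 1 ≤ p := Nat.mod_lt _ hp
    have : (momentPointMod n p k j : ℝ) + 1 ≤ p := by exact_mod_cast this
    linarith
  · have hlast : ((j : ℕ) + 1) % n = 0 := by
      rw [show (j : ℕ) + 1 = n by omega, Nat.mod_self]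
    have : momentPointMod n p k j ≤ 1 := by
      rw [momentPointMod, hlast, pow_zero]
      exact Nat.mod_le 1 p
    exact_mod_cast this

theorem isLatticePoint_of_mem_momentCurveMod {n p : ℕ} {y : Euc n} (hy : y ∈ momentCurveMod n p) :
    IsLatticePoint y := by
  obtain ⟨k, -, rfl⟩ := mem_image.mp hy
  exact fun j => ⟨momentPointMod n p k j, by simp⟩

theorem inGenPos_momentCurveMod {n p : ℕ} [Fact p.Prime] (hn : 2 ≤ n) :
    InGenPos (momentCurveMod n p) := by
  intro T hT hTcard
  obtain ⟨U, hUp, rfl⟩ := subset_image_iff.mp hT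
  have hinj := (injOn_momentPointMod hn p).mono (coe_subset.mpr hUp)
  have hU : #U = n := by rwa [card_image_of_injOn hinj] at hTcard
  set κ := U.orderEmbOfFin hU
  have hκ : Function.Injective fun i => (κ i : ZMod p) := by
    intro i j hij
    have hlt (i : Fin n) : κ i < p := mem_range.mp (hUp (U.orderEmbOfFin_mem hU i))
    simp only [ZMod.natCast_eq_natCast_iff', Nat.mod_eq_of_lt (hlt _)] at hij
    exact κ.injective hij
  have hli : LinearIndepOn ℝ (fun k => WithLp.toLp 2 fun j => (momentPointMod n p k j : ℝ)) U := by
    rw [← range_orderEmbOfFin U hU, linearIndepOn_range_iff κ.injective]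
    exact linearIndependent_momentPointMod hκ
  rw [coe_image]
  exact hli.image_of_comp _ id

theorem exists_prime_half_lt_le_add_one {x : ℝ} (hx : 1 < x) :
    ∃ p : ℕ, p.Prime ∧ x / 2 < p ∧ (p : ℝ) ≤ x + 1 := by
  set m := ⌊(x + 1) / 2⌋₊
  obtain ⟨p, hp, hmp, hpm⟩ :=
    Nat.exists_prime_lt_and_le_two_mul m (Nat.floor_pos.mpr (by linarith)).ne'
  have hm_le : (m : ℝ) ≤ (x + 1) / 2 := Nat.floor_le (by linarith)
  have hm_lt : (x + 1) / 2 < m + 1 := Nat.lt_floor_add_one _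
  have hmp' : (m : ℝ) + 1 ≤ p := by exact_mod_cast hmp
  have hpm' : (p : ℝ) ≤ 2 * m := by exact_mod_cast hpm
  exact ⟨p, hp, by linarith, by linarith⟩

theorem two_mul_add_two_le_coverNum_boxBody {n N : ℕ} {x : ℝ} (hn : 2 ≤ n) (hN : 1 ≤ N)
    (hNx : (N : ℝ) ≤ x) : 2 * N + 2 ≤ coverNum (boxBody n x) := by
  refine le_csInf ?_ ?_
  · obtain ⟨F, hF, hcov⟩ := exists_finset_ne_top_cover (K := ℝ) (V := Euc n)
      (by rw [finrank_euclideanSpace_fin]; omega) (finite_setOf_mem_boxBody_isLatticePoint n x)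
    exact ⟨#F, F, rfl, hF, fun y hy hl => hcov y ⟨hy, hl⟩⟩
  · rintro k ⟨F, rfl, hF, hcov⟩
    refine two_mul_add_two_le_card_of_covers hn hN hF fun a ha => ?_
    have hlayer : ∃ e : ℤ, |e| ≤ 1 ∧ a ∈ boxLayer n N e := by
      rcases mem_union.mp ha with h | h
      · exact ⟨1, by norm_num, h⟩
      · exact ⟨0, by norm_num, mem_of_mem_erase h⟩
    obtain ⟨e, he, hae⟩ := hlayer
    exact hcov _ (toLp_mem_boxBody_of_mem_boxLayer hNx he hae)
      (isLatticePoint_toLp_of_mem_boxLayer hae)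

theorem prime_le_maxGenPos_boxBody {n p : ℕ} {x : ℝ} (hn : 2 ≤ n) (hp : p.Prime)
    (hpx : (p : ℝ) ≤ x + 1) : p ≤ maxGenPos (boxBody n x) := by
  have := Fact.mk hp
  have hfin := finite_setOf_mem_boxBody_isLatticePoint n x
  refine le_csSup ⟨#hfin.toFinset, ?_⟩ ⟨momentCurveMod n p, card_momentCurveMod hn p,
    momentCurveMod_subset_boxBody hp.pos hpx, fun y hy => isLatticePoint_of_mem_momentCurveMod hy,
    inGenPos_momentCurveMod hn⟩
  rintro k ⟨S, rfl, hS, hlat, -⟩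
  exact card_le_card fun y hy => hfin.mem_toFinset.mpr ⟨hS hy, hlat y hy⟩

/-- For `x > 1`, the box `C_x = [-x,x]^{n-1} × [-1,1]` satisfies
`g(C_x) ≥ 2x` and `h(C_x) ≥ x/2`. -/
theorem box_coverNum_and_genPos (n : ℕ) (hn : 2 ≤ n) (x : ℝ) (hx : 1 < x) :
    2 * x ≤ (coverNum (boxBody n x) : ℝ) ∧ x / 2 ≤ (maxGenPos (boxBody n x) : ℝ) := by
  constructor
  · have hcover := two_mul_add_two_le_coverNum_boxBody hn
      (Nat.le_floor (by exact_mod_cast hx.le)) (Nat.floor_le (by linarith))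
    have := Nat.lt_floor_add_one x
    calc 2 * x ≤ ((2 * ⌊x⌋₊ + 2 : ℕ) : ℝ) := by push_cast; linarith
      _ ≤ _ := by exact_mod_cast hcover
  · obtain ⟨p, hp, hxp, hpx⟩ := exists_prime_half_lt_le_add_one hx
    calc x / 2 ≤ p := hxp.le
      _ ≤ _ := by exact_mod_cast prime_le_maxGenPos_boxBody hn hp hpx
end
end

section
/- For every real x > 1, the cross-polytope C'_x = conv({−x e_i, x e_i : 1 ≤ i < n} ∪ {−e_n, e_n}) ⊆ ℝ^n satisfies g(C'_x) = 2 and h(C'_x) = n. -/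
open scoped BigOperators
open Pointwise Metric

noncomputable section

/-- The cross-polytope `C'_x = conv({±x·e_i : 1 ≤ i < n} ∪ {±e_n}) ⊆ ℝ^n`. -/
def crossBody (n : ℕ) (x : ℝ) : Set (Euc n) :=
  convexHull ℝ {p : Euc n | ∃ i : Fin n,
    ((i : ℕ) < n - 1 ∧ (p = x • EuclideanSpace.single i (1 : ℝ) ∨
                        p = -(x • EuclideanSpace.single i (1 : ℝ)))) ∨
    ((i : ℕ) = n - 1 ∧ (p = EuclideanSpace.single i (1 : ℝ) ∨
                        p = -EuclideanSpace.single i (1 : ℝ)))}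

/-!
Every point `p` of `C'_x` satisfies `∑ i, |p i| / r i ≤ 1`, where `r` is `1` at the last
coordinate and `x` elsewhere. Hence a lattice point of `C'_x` lies on the hyperplane
`W = {p | p_n = 0}` unless it is `±e_n`, so `W` and `ℝ e_n` cover `C'_x ∩ ℤ^n`; a single proper
subspace cannot, since `C'_x` contains every `e_i` when `x ≥ 1`. A set in general position has
fewer than `n` points in `W` and cannot contain both `e_n` and `-e_n`, so it has at most `n`
points, and the standard basis has exactly `n`.
-/

section ConvexSum

variable {𝕜 E β ι : Type*} [Semiring 𝕜] [PartialOrder 𝕜] [AddCommMonoid E] [AddCommMonoid β]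
  [PartialOrder β] [IsOrderedAddMonoid β] [SMul 𝕜 E] [Module 𝕜 β] {s : Set E}

theorem ConvexOn.sum {t : Finset ι} {f : ι → E → β} (hs : Convex 𝕜 s)
    (hf : ∀ i ∈ t, ConvexOn 𝕜 s (f i)) : ConvexOn 𝕜 s fun x => ∑ i ∈ t, f i x := by
  classical
  induction t using Finset.induction_on with
  | empty => simpa using convexOn_const (0 : β) hs
  | insert a t hat ih =>
    simp only [Finset.sum_insert hat]
    exact (hf a (t.mem_insert_self a)).add (ih fun i hi => hf i (Finset.mem_insert_of_mem hi))

end ConvexSum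

section

variable {n : ℕ}

lemma isLatticePoint_single (i : Fin n) : IsLatticePoint (EuclideanSpace.single i (1 : ℝ)) :=
  fun j => ⟨if j = i then 1 else 0, by by_cases h : j = i <;> simp [h]⟩

lemma coe_basisFun_toBasis :
    ⇑(EuclideanSpace.basisFun (Fin n) ℝ).toBasis = fun i => EuclideanSpace.single i (1 : ℝ) := by
  ext1 i
  simp

lemma span_range_single :
    Submodule.span ℝ (Set.range fun i : Fin n => EuclideanSpace.single i (1 : ℝ)) = ⊤ :=
  coe_basisFun_toBasis ▸ (EuclideanSpace.basisFun (Fin n) ℝ).toBasis.span_eq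

lemma linearIndependent_single :
    LinearIndependent ℝ fun i : Fin n => EuclideanSpace.single i (1 : ℝ) :=
  coe_basisFun_toBasis ▸ (EuclideanSpace.basisFun (Fin n) ℝ).toBasis.linearIndependent

lemma exists_single_notMem_of_ne_top {H : Submodule ℝ (Euc n)} (hH : H ≠ ⊤) :
    ∃ i, EuclideanSpace.single i (1 : ℝ) ∉ H := by
  by_contra! h
  exact hH (eq_top_iff.2 (span_range_single ▸ Submodule.span_le.2 (Set.range_subset_iff.2 h)))

lemma span_singleton_ne_top_of_two_le (hn : 2 ≤ n) (v : Euc n) : (ℝ ∙ v) ≠ ⊤ := by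
  intro h
  have := finrank_span_le_card (R := ℝ) ({v} : Set (Euc n))
  rw [h, finrank_top, finrank_euclideanSpace_fin] at this
  simp only [Set.toFinset_singleton, Finset.card_singleton] at this
  omega

lemma two_le_card_of_forall_single_mem (hn : 0 < n) {F : Finset (Submodule ℝ (Euc n))}
    (hF : ∀ H ∈ F, H ≠ ⊤) (hcov : ∀ i, ∃ H ∈ F, EuclideanSpace.single i (1 : ℝ) ∈ H) :
    2 ≤ F.card := by
  by_contra! hF1
  obtain ⟨H, hH, -⟩ := hcov ⟨0, hn⟩
  obtain ⟨i, hi⟩ := exists_single_notMem_of_ne_top (hF H hH)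
  obtain ⟨H', hH', hiH'⟩ := hcov i
  exact hi (Finset.card_le_one.1 (by omega) H' hH' H hH ▸ hiH')

theorem coverNum_eq_two {C : Set (Euc n)} (hn : 0 < n)
    (hC : ∀ i, EuclideanSpace.single i (1 : ℝ) ∈ C) {W₁ W₂ : Submodule ℝ (Euc n)}
    (hW₁ : W₁ ≠ ⊤) (hW₂ : W₂ ≠ ⊤) (hcov : ∀ p ∈ C, IsLatticePoint p → p ∈ W₁ ∨ p ∈ W₂) :
    coverNum C = 2 := by
  classical
  have two_le : ∀ F : Finset (Submodule ℝ (Euc n)), (∀ H ∈ F, H ≠ ⊤) →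
      (∀ p ∈ C, IsLatticePoint p → ∃ H ∈ F, p ∈ H) → 2 ≤ F.card := fun F hF hFcov =>
    two_le_card_of_forall_single_mem hn hF fun i => hFcov _ (hC i) (isLatticePoint_single i)
  have hproper : ∀ H ∈ ({W₁, W₂} : Finset _), H ≠ ⊤ := by simp [hW₁, hW₂]
  have hpaircov : ∀ p ∈ C, IsLatticePoint p → ∃ H ∈ ({W₁, W₂} : Finset _), p ∈ H := by
    simpa using hcov
  refine IsLeast.csInf_eq ⟨⟨{W₁, W₂}, ?_, hproper, hpaircov⟩, ?_⟩
  · exact le_antisymm Finset.card_le_two (two_le _ hproper hpaircov)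
  · rintro k ⟨F, rfl, hF, hFcov⟩
    exact two_le F hF hFcov

namespace InGenPos

variable {S : Finset (Euc n)}

lemma of_linearIndepOn (hS : LinearIndepOn ℝ id (S : Set (Euc n))) : InGenPos S :=
  fun _ hT _ => hS.mono (Finset.coe_subset.2 hT)

lemma card_filter_mem_lt (hS : InGenPos S) {W : Submodule ℝ (Euc n)} [DecidablePred (· ∈ W)]
    (hW : W ≠ ⊤) :
    (S.filter (· ∈ W)).card < n := by
  by_contra! h
  obtain ⟨T, hTS, hT⟩ := Finset.exists_subset_card_eq h
  have hTW : Submodule.span ℝ (T : Set (Euc n)) ≤ W :=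
    Submodule.span_le.2 fun p hp => (Finset.mem_filter.1 (hTS hp)).2
  have hTrank := finrank_span_finset_eq_card (hS T (hTS.trans (Finset.filter_subset _ _)) hT)
  have hWrank := Submodule.finrank_lt hW
  have hTWrank := Submodule.finrank_mono hTW
  simp only [finrank_euclideanSpace_fin] at hWrank
  omega

lemma neg_notMem (hS : InGenPos S) (hn : 2 ≤ n) (hSn : n ≤ S.card) {v : Euc n} (hv : v ∈ S) :
    -v ∉ S := by
  classical
  intro hnv
  obtain ⟨T, hvT, hTS, hT⟩ := Finset.exists_subsuperset_card_eq
    (Finset.insert_subset hv (Finset.singleton_subset_iff.2 hnv)) (Finset.card_le_two.trans hn) hSn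
  have hpair : LinearIndepOn ℝ id {v, -v} := LinearIndepOn.mono (hS T hTS hT)
    (by simpa only [Finset.coe_insert, Finset.coe_singleton] using Finset.coe_subset.2 hvT)
  rcases eq_or_ne v (-v) with h | h
  · have h2 : (2 : ℝ) • v = 0 := by rw [two_smul]; nth_rw 2 [h]; exact add_neg_cancel v
    exact hpair.zero_notMem_image ⟨v, by simp, (smul_eq_zero.1 h2).resolve_left two_ne_zero⟩
  · simpa using ((LinearIndepOn.pair_iff id h).1 hpair 1 1 (by simp)).1

lemma card_le_of_mem_or_eq_or_eq_neg (hS : InGenPos S) (hn : 2 ≤ n)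
    {W : Submodule ℝ (Euc n)} (hW : W ≠ ⊤) {v : Euc n}
    (hSW : ∀ p ∈ S, p ∈ W ∨ p = v ∨ p = -v) : S.card ≤ n := by
  classical
  by_contra! hSn
  have hout : (S.filter (· ∉ W)).card ≤ 1 := by
    refine Finset.card_le_one.2 fun a ha b hb => ?_
    rw [Finset.mem_filter] at ha hb
    have hv := hS.neg_notMem hn hSn.le (v := v)
    rcases (hSW a ha.1).resolve_left ha.2 with rfl | rfl <;>
      rcases (hSW b hb.1).resolve_left hb.2 with rfl | rfl <;> simp_all
  have hsplit : (S.filter (· ∈ W)).card + (S.filter (· ∉ W)).card = S.card :=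
    Finset.card_filter_add_card_filter_not _
  have hin := hS.card_filter_mem_lt hW
  omega

end InGenPos

theorem maxGenPos_eq {C : Set (Euc n)} (hn : 2 ≤ n)
    (hC : ∀ i, EuclideanSpace.single i (1 : ℝ) ∈ C) {W : Submodule ℝ (Euc n)} (hW : W ≠ ⊤)
    {v : Euc n} (hCW : ∀ p ∈ C, IsLatticePoint p → p ∈ W ∨ p = v ∨ p = -v) :
    maxGenPos C = n := by
  classical
  refine IsGreatest.csSup_eq ⟨⟨Finset.univ.image fun i => EuclideanSpace.single i (1 : ℝ),
    ?_, ?_, ?_, ?_⟩, ?_⟩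
  · simp [Finset.card_image_of_injective _ linearIndependent_single.injective]
  · simpa [Set.range_subset_iff] using hC
  · simpa using fun i => isLatticePoint_single (n := n) i
  · exact InGenPos.of_linearIndepOn (by
      simpa using (linearIndepOn_id_range_iff linearIndependent_single.injective).2
        linearIndependent_single)
  · rintro k ⟨S, rfl, hSC, hSlat, hS⟩
    exact hS.card_le_of_mem_or_eq_or_eq_neg hn hW fun p hp => hCW p (hSC hp) (hSlat p hp)

lemma convexHull_subset_sum_abs_div_le_one {r : Fin n → ℝ} (hr : ∀ i, 0 < r i) :
    convexHull ℝ {p : Euc n | ∃ i, p = r i • EuclideanSpace.single i 1 ∨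
      p = -(r i • EuclideanSpace.single i 1)} ⊆ {p | ∑ i, |p i| / r i ≤ 1} := by
  have hconv : ConvexOn ℝ Set.univ fun p : Euc n => ∑ i, |p i| / r i := by
    refine ConvexOn.sum convex_univ fun i _ => ?_
    simpa [div_eq_inv_mul] using (convexOn_univ_norm.comp_linearMap
      (EuclideanSpace.projₗ (𝕜 := ℝ) i)).smul (inv_nonneg.2 (hr i).le)
  refine convexHull_min ?_ (by simpa using hconv.convex_le 1)
  rintro p ⟨i, rfl | rfl⟩ <;> simp [apply_ite, ite_div, abs_of_pos (hr i), (hr i).ne']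

lemma IsLatticePoint.eq_zero_or_eq_single_or_eq_neg_single {p : Euc n} (hp : IsLatticePoint p)
    {r : Fin n → ℝ} (hr : ∀ i, 0 < r i) {L : Fin n} (hrL : r L = 1)
    (hsum : ∑ i, |p i| / r i ≤ 1) :
    p L = 0 ∨ p = EuclideanSpace.single L 1 ∨ p = -EuclideanSpace.single L 1 := by
  refine or_iff_not_imp_left.2 fun hL => ?_
  have hterm : ∀ i, 0 ≤ |p i| / r i := fun i => div_nonneg (abs_nonneg _) (hr i).le
  have hL1 : (1 : ℝ) ≤ |p L| := by
    obtain ⟨m, hm⟩ := hp L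
    have hm0 : m ≠ 0 := by rintro rfl; simp [hm] at hL
    exact hm ▸ (by exact_mod_cast Int.one_le_abs hm0 : (1 : ℝ) ≤ |(m : ℝ)|)
  rw [← Finset.add_sum_erase _ _ (Finset.mem_univ L), hrL, div_one] at hsum
  have hrest : ∑ i ∈ Finset.univ.erase L, |p i| / r i = 0 :=
    le_antisymm (by linarith) (Finset.sum_nonneg fun i _ => hterm i)
  have hzero : ∀ i ≠ L, p i = 0 := fun i hi => by
    simpa [(hr i).ne'] using
      (Finset.sum_eq_zero_iff_of_nonneg fun i _ => hterm i).1 hrest i (by simp [hi])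
  have hpL : p = p L • EuclideanSpace.single L 1 := by
    ext i
    by_cases hi : i = L <;> simp [hi, hzero]
  rcases (abs_eq zero_le_one).1 (le_antisymm (by linarith [hterm L]) hL1) with h | h <;>
    rw [hpL, h] <;> simp

/-- `crossBody n x` is the convex hull of the points `±crossRadius n x i • e_i`. -/
def crossRadius (n : ℕ) (x : ℝ) (i : Fin n) : ℝ := if (i : ℕ) = n - 1 then 1 else x

variable {x : ℝ}

lemma crossRadius_pos (hx : 0 < x) (i : Fin n) : 0 < crossRadius n x i := by
  unfold crossRadius
  split_ifs <;> positivity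

lemma crossBody_subset (hx : 0 < x) :
    crossBody n x ⊆ {p | ∑ i, |p i| / crossRadius n x i ≤ 1} := by
  refine (convexHull_mono ?_).trans (convexHull_subset_sum_abs_div_le_one (crossRadius_pos hx))
  rintro p ⟨i, ⟨hi, hp⟩ | ⟨hi, hp⟩⟩
  · exact ⟨i, by simpa [crossRadius, hi.ne] using hp⟩
  · exact ⟨i, by simpa [crossRadius, hi] using hp⟩

lemma single_mem_crossBody (hx : 1 ≤ x) (i : Fin n) :
    EuclideanSpace.single i (1 : ℝ) ∈ crossBody n x := by
  by_cases hi : (i : ℕ) = n - 1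
  · exact subset_convexHull ℝ _ ⟨i, Or.inr ⟨hi, Or.inl rfl⟩⟩
  have hi' : (i : ℕ) < n - 1 := by omega
  have hpos : x • EuclideanSpace.single i (1 : ℝ) ∈ crossBody n x :=
    subset_convexHull ℝ _ ⟨i, Or.inl ⟨hi', Or.inl rfl⟩⟩
  have hneg : -(x • EuclideanSpace.single i (1 : ℝ)) ∈ crossBody n x :=
    subset_convexHull ℝ _ ⟨i, Or.inl ⟨hi', Or.inr rfl⟩⟩
  have hx0 : x ≠ 0 := by positivity
  have hcombo : ((1 + x⁻¹) / 2) • x • EuclideanSpace.single i (1 : ℝ) +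
      ((1 - x⁻¹) / 2) • -(x • EuclideanSpace.single i (1 : ℝ)) = EuclideanSpace.single i 1 := by
    match_scalars
    field_simp
    ring
  exact hcombo ▸ convex_convexHull ℝ _ hpos hneg (by positivity)
    (by linarith [inv_le_one_of_one_le₀ hx]) (by ring)

end

/-- For `x > 1`, the cross-polytope
`C'_x = conv({±x·e_i : 1 ≤ i < n} ∪ {±e_n})` satisfies `g(C'_x) = 2` and `h(C'_x) = n`. -/
theorem cross_coverNum_and_genPos (n : ℕ) (hn : 2 ≤ n) (x : ℝ) (hx : 1 < x) :
    coverNum (crossBody n x) = 2 ∧ maxGenPos (crossBody n x) = n := by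
  set L : Fin n := ⟨n - 1, by omega⟩
  set e := EuclideanSpace.single L (1 : ℝ)
  set W := LinearMap.ker (EuclideanSpace.projₗ (𝕜 := ℝ) L)
  have hW : W ≠ ⊤ := fun h => by simpa [W, e, L] using (h ▸ Submodule.mem_top : e ∈ W)
  have hlattice : ∀ p ∈ crossBody n x, IsLatticePoint p → p ∈ W ∨ p = e ∨ p = -e :=
    fun p hp hlat => hlat.eq_zero_or_eq_single_or_eq_neg_single (crossRadius_pos (by linarith))
      (if_pos rfl) (crossBody_subset (by linarith) hp)
  refine ⟨coverNum_eq_two (by omega) (single_mem_crossBody hx.le) hW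
    (span_singleton_ne_top_of_two_le hn e) fun p hp hlat => ?_,
    maxGenPos_eq hn (single_mem_crossBody hx.le) hW hlattice⟩
  rcases hlattice p hp hlat with h | rfl | rfl
  · exact Or.inl h
  · exact Or.inr (Submodule.mem_span_singleton_self e)
  · exact Or.inr (Submodule.neg_mem _ (Submodule.mem_span_singleton_self e))
end
end

section
/- Let p be a prime and n ≥ 2 an integer. Consider the p + 1 vectors in F_p^n consisting of v_i = (1, i, i², …, i^{n−1}) for i = 0, 1, …, p−1, together with v_∞ = (0, …, 0, 1). These vectors are n-wise linearly independent over F_p: any n distinct vectors among them are linearly independent over the field with p elements. -/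
noncomputable section

/-- The `p+1` vectors of `F_p^n`: `v_i = (1, i, i², …, i^{n-1})` for `0 ≤ i < p`,
and `v_∞ = (0, …, 0, 1)` for the last index. -/
def momentVec (p n : ℕ) (i : Fin (p + 1)) : Fin n → ZMod p :=
  if (i : ℕ) < p then fun j => ((i : ℕ) : ZMod p) ^ (j : ℕ)
  else fun j => if (j : ℕ) = n - 1 then 1 else 0

/-! `v_i` is the image of the point `(i : 1)` of `ℙ¹(F_p)`, and `v_∞` that of `(1 : 0)`, under the
moment curve `(x : y) ↦ (x ^ j * y ^ (n - 1 - j))ⱼ`. So `n` of them are the rows of a projective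
Vandermonde matrix, whose determinant `∏_{i < j} (x_j y_i - x_i y_j)` vanishes only when two of
the points coincide. -/

open Finset

namespace Matrix

theorem linearIndependent_rectVandermonde {K α : Type*} [Field K] [Fintype α] {n : ℕ}
    {v w : α → K} (hcard : Fintype.card α = n) (h : Pairwise fun i j => v j * w i ≠ v i * w j) :
    LinearIndependent K (rectVandermonde v w n).row := by
  let e := (Fintype.equivFinOfCardEq hcard).symm
  rw [← linearIndependent_equiv e]
  change LinearIndependent K (projVandermonde (v ∘ e) (w ∘ e)).row
  rw [linearIndependent_rows_iff_isUnit, isUnit_iff_isUnit_det, isUnit_iff_ne_zero,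
    det_projVandermonde]
  refine prod_ne_zero_iff.2 fun i _ => prod_ne_zero_iff.2 fun j hj => sub_ne_zero.2 (h ?_)
  exact e.injective.ne (mem_Ioi.1 hj).ne

end Matrix

def momentPoint (p : ℕ) (i : Fin (p + 1)) : ZMod p × ZMod p :=
  if (i : ℕ) < p then ((i : ℕ), 1) else (1, 0)

theorem momentVec_eq_rectVandermonde (p n : ℕ) :
    momentVec p n =
      Matrix.rectVandermonde (fun i => (momentPoint p i).1) (fun i => (momentPoint p i).2) n := by
  ext i j
  rw [Matrix.rectVandermonde_apply, momentVec, momentPoint]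
  by_cases hi : (i : ℕ) < p
  · simp [hi]
  by_cases hj : (j : ℕ) = n - 1
  · simp [hi, hj, Fin.val_rev, show n - (n - 1 + 1) = 0 by omega]
  · simp [hi, hj, Fin.val_rev, zero_pow (show n - (j + 1) ≠ 0 by omega)]

theorem momentPoint_pairwise_ne (p : ℕ) [Fact (1 < p)] :
    Pairwise fun i j : Fin (p + 1) =>
      (momentPoint p j).1 * (momentPoint p i).2 ≠ (momentPoint p i).1 * (momentPoint p j).2 := by
  intro i j hij
  have hij' : (i : ℕ) ≠ j := Fin.val_injective.ne hij
  simp only [momentPoint]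
  split_ifs with hi hj hj
  · simpa [ZMod.natCast_eq_natCast_iff', Nat.mod_eq_of_lt hi, Nat.mod_eq_of_lt hj] using hij'.symm
  · simp
  · simp
  · omega

theorem momentVec_n_wise_linearIndependent_general (p n : ℕ) (hp : p.Prime) :
    ∀ T : Finset (Fin (p + 1)), T.card = n →
      LinearIndependent (ZMod p)
        (fun t : (T : Set (Fin (p + 1))) => momentVec p n t) := by
  have : Fact p.Prime := ⟨hp⟩
  intro T hT
  rw [momentVec_eq_rectVandermonde]
  exact Matrix.linearIndependent_rectVandermonde (by simpa using hT)
    fun s t hst => momentPoint_pairwise_ne p (Subtype.val_injective.ne hst)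

/-- For a prime `p`, the vectors `v_0, …, v_{p-1}, v_∞` of `F_p^n`
are `n`-wise linearly independent: any `n` distinct ones among them are linearly
independent over `F_p`. -/
theorem momentVec_n_wise_linearIndependent (p n : ℕ) (hp : p.Prime) (hn : 2 ≤ n) :
    ∀ T : Finset (Fin (p + 1)), T.card = n →
      LinearIndependent (ZMod p)
        (fun t : (T : Set (Fin (p + 1))) => momentVec p n t) :=
  momentVec_n_wise_linearIndependent_general p n hp
end
end

section
/- For every r ≥ 1, Σ_{H ∈ H_r} |H ∩ rB^n ∩ ℤ^n| ≤ |H_r| + |rB^n ∩ ℤ^n|^{n−1}, where |rB^n ∩ ℤ^n| denotes the number of lattice points in the ball of radius r. -/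
/-!
Count the pairs `(H, x)` with `H ∈ H_r` and `x ≠ 0` a lattice point of `rB^n` on `H`: each `H`
carries at most one lattice point (the origin) more than it has pairs. Since `H` is spanned by
its lattice points in `rB^n`, every such `x` is the first entry of an `(n-1)`-tuple of these
points spanning `H`; the tuple determines both `x` and `H`, so the pairs inject into
`(rB^n ∩ ℤ^n)^{n-1}`.
-/

open scoped BigOperators
open Pointwise Metric

noncomputable section

/-- `H_r`: the set of `(n-1)`-dimensional linear subspaces of `ℝ^n` containing
`n-1` linearly independent lattice points of norm at most `r`. -/
def hyperSet (n : ℕ) (r : ℝ) : Set (Submodule ℝ (Euc n)) :=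
  {H | Module.finrank ℝ H = n - 1 ∧ ∃ v : Fin (n - 1) → Euc n,
    LinearIndependent ℝ v ∧ ∀ j, IsLatticePoint (v j) ∧ ‖v j‖ ≤ r ∧ v j ∈ H}

/-- The number of lattice points of the ball of radius `r` lying on the subspace `H`. -/
def hypLatCount (n : ℕ) (H : Submodule ℝ (Euc n)) (r : ℝ) : ℕ :=
  {x : Euc n | x ∈ H ∧ ‖x‖ ≤ r ∧ IsLatticePoint x}.ncard

section Spanning

variable {K V : Type*} [DivisionRing K] [AddCommGroup V] [Module K V]

theorem Submodule.exists_fin_spanning_family_apply_eq {T : Set V} {H : Submodule K V}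
    (hT : Submodule.span K T = H) {d : ℕ} (hd : Module.finrank K H = d) {x : V} (hxT : x ∈ T)
    (hx0 : x ≠ 0) (i₀ : Fin d) :
    ∃ w : Fin d → V, w i₀ = x ∧ (∀ i, w i ∈ T) ∧ Submodule.span K (Set.range w) = H := by
  obtain ⟨b, hbT, hxb, hTb, hb⟩ := exists_linearIndepOn_id_extension
    (LinearIndepOn.singleton (R := K) (v := id) hx0) (Set.singleton_subset_iff.2 hxT)
  have hbH : Submodule.span K b = H :=
    le_antisymm (hT ▸ Submodule.span_mono hbT) (hT ▸ Submodule.span_le.2 hTb)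
  have : Module.Finite K H := Module.finite_of_finrank_pos (hd ▸ i₀.pos)
  obtain ⟨e⟩ : Nonempty (b ≃ Fin d) := Cardinal.mk_eq_nat_iff.1 <| by
    rw [← rank_span_set hb, hbH, ← Module.finrank_eq_rank, hd]
  let σ := Equiv.swap i₀ (e ⟨x, hxb rfl⟩)
  refine ⟨fun i => e.symm (σ i), by simp [σ], fun i => hbT (e.symm (σ i)).2, ?_⟩
  have hrange : Set.range (fun i => (e.symm (σ i) : V)) = b :=
    ((e.symm.surjective.comp σ.surjective).range_comp Subtype.val).trans Subtype.range_coe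
  rw [hrange, hbH]

end Spanning

theorem finite_setOf_isLatticePoint_norm_le (n : ℕ) (r : ℝ) :
    {x : Euc n | IsLatticePoint x ∧ ‖x‖ ≤ r}.Finite := by
  have hbox : (Set.univ.pi fun _ : Fin n => Set.Icc (-⌈r⌉) ⌈r⌉).Finite :=
    Set.Finite.pi fun _ => Set.finite_Icc _ _
  refine (hbox.image fun m => (WithLp.toLp 2 fun i => (m i : ℝ) : Euc n)).subset ?_
  rintro x ⟨hx, hxr⟩
  choose m hm using hx
  refine ⟨m, fun i _ => abs_le.1 ?_, by ext i; simp [hm i]⟩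
  have : |(m i : ℝ)| ≤ ⌈r⌉ := by
    rw [← hm i, ← Real.norm_eq_abs]
    exact (PiLp.norm_apply_le x i).trans (hxr.trans (Int.le_ceil r))
  exact_mod_cast this

def latticeBall (n : ℕ) (r : ℝ) : Finset (Euc n) :=
  (finite_setOf_isLatticePoint_norm_le n r).toFinset

@[simp]
theorem mem_latticeBall {n : ℕ} {r : ℝ} {x : Euc n} :
    x ∈ latticeBall n r ↔ IsLatticePoint x ∧ ‖x‖ ≤ r :=
  Set.Finite.mem_toFinset _

theorem card_latticeBall (n : ℕ) (r : ℝ) :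
    (latticeBall n r).card = {x : Euc n | IsLatticePoint x ∧ ‖x‖ ≤ r}.ncard :=
  (Set.ncard_eq_toFinset_card _ _).symm

section

open Classical

def latticeBallOn (n : ℕ) (H : Submodule ℝ (Euc n)) (r : ℝ) : Finset (Euc n) :=
  (latticeBall n r).filter (· ∈ H)

@[simp]
theorem mem_latticeBallOn {n : ℕ} {H : Submodule ℝ (Euc n)} {r : ℝ} {x : Euc n} :
    x ∈ latticeBallOn n H r ↔ (IsLatticePoint x ∧ ‖x‖ ≤ r) ∧ x ∈ H := by
  simp [latticeBallOn]

theorem hypLatCount_eq_card_latticeBallOn (n : ℕ) (H : Submodule ℝ (Euc n)) (r : ℝ) :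
    hypLatCount n H r = (latticeBallOn n H r).card := by
  rw [hypLatCount, ← Set.ncard_coe_finset]
  congr 1
  ext x
  simp [and_comm]

theorem span_latticeBallOn {n : ℕ} {r : ℝ} {H : Submodule ℝ (Euc n)}
    (hH : H ∈ hyperSet n r) :
    Submodule.span ℝ ↑(latticeBallOn n H r) = H := by
  obtain ⟨hrank, v, hv, hvH⟩ := hH
  have hle : Submodule.span ℝ ↑(latticeBallOn n H r) ≤ H :=
    Submodule.span_le.2 fun x hx => (mem_latticeBallOn.1 hx).2
  have hv_mem : Set.range v ⊆ ↑(latticeBallOn n H r) :=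
    Set.range_subset_iff.2 fun j => by simpa [and_assoc] using hvH j
  have hv_span : Submodule.span ℝ (Set.range v) = H :=
    Submodule.eq_of_le_of_finrank_le (hle.trans' (Submodule.span_mono hv_mem))
      (by rw [hrank, finrank_span_eq_card hv, Fintype.card_fin])
  exact le_antisymm hle (hv_span.symm.le.trans (Submodule.span_mono hv_mem))

theorem card_sigma_latticeBallOn_erase_zero_le {n : ℕ} (hn : 2 ≤ n) {r : ℝ}
    {S : Finset (Submodule ℝ (Euc n))} (hS : ∀ H ∈ S, H ∈ hyperSet n r) :
    (S.sigma fun H => (latticeBallOn n H r).erase 0).card ≤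
      (latticeBall n r).card ^ (n - 1) := by
  let i₀ : Fin (n - 1) := ⟨0, by omega⟩
  have hframe : ∀ p ∈ S.sigma fun H => (latticeBallOn n H r).erase 0,
      ∃ w : Fin (n - 1) → Euc n, w i₀ = p.2 ∧ (∀ i, w i ∈ latticeBall n r) ∧
        Submodule.span ℝ (Set.range w) = p.1 := by
    rintro ⟨H, x⟩ hp
    simp only [Finset.mem_sigma, Finset.mem_erase] at hp
    obtain ⟨hHS, hx0, hx⟩ := hp
    obtain ⟨w, hw₀, hwT, hw⟩ := Submodule.exists_fin_spanning_family_apply_eq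
      (span_latticeBallOn (hS H hHS)) (hS H hHS).1 (Finset.mem_coe.2 hx) hx0 i₀
    exact ⟨w, hw₀, fun i => mem_latticeBall.2 (mem_latticeBallOn.1 (hwT i)).1, hw⟩
  choose! g hg₀ hgL hgspan using hframe
  calc _ ≤ (Fintype.piFinset fun _ : Fin (n - 1) => latticeBall n r).card := by
        refine Finset.card_le_card_of_injOn g (fun p hp => Fintype.mem_piFinset.2 (hgL p hp)) ?_
        rintro ⟨H, x⟩ hp ⟨H', x'⟩ hp' hgg
        obtain rfl : x = x' := (hg₀ _ hp).symm.trans (hgg ▸ hg₀ _ hp')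
        obtain rfl : H = H' := (hgspan _ hp).symm.trans (hgg ▸ hgspan _ hp')
        rfl
    _ = (latticeBall n r).card ^ (n - 1) := by simp

end

theorem sum_hyperplane_counts_le_general (n : ℕ) (hn : 2 ≤ n) (r : ℝ) :
    ∀ S : Finset (Submodule ℝ (Euc n)), ↑S = hyperSet n r →
      ∑ H ∈ S, hypLatCount n H r ≤
        S.card + ({x : Euc n | IsLatticePoint x ∧ ‖x‖ ≤ r}.ncard) ^ (n - 1) := by
  classical
  intro S hS
  have hS' : ∀ H ∈ S, H ∈ hyperSet n r := fun H hH => hS ▸ hH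
  calc ∑ H ∈ S, hypLatCount n H r
      ≤ ∑ H ∈ S, (((latticeBallOn n H r).erase 0).card + 1) :=
        Finset.sum_le_sum fun H _ => by
          rw [hypLatCount_eq_card_latticeBallOn]
          have := Finset.pred_card_le_card_erase (s := latticeBallOn n H r) (a := 0)
          omega
    _ = (S.sigma fun H => (latticeBallOn n H r).erase 0).card + S.card := by
        rw [Finset.sum_add_distrib, Finset.card_sigma, Finset.card_eq_sum_ones S]
    _ ≤ (latticeBall n r).card ^ (n - 1) + S.card := by
        gcongr
        exact card_sigma_latticeBallOn_erase_zero_le hn hS'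
    _ = S.card + ({x : Euc n | IsLatticePoint x ∧ ‖x‖ ≤ r}.ncard) ^ (n - 1) := by
        rw [add_comm, card_latticeBall]

/-- For every `r ≥ 1`,
`Σ_{H ∈ H_r} |H ∩ rB^n ∩ ℤ^n| ≤ |H_r| + |rB^n ∩ ℤ^n|^{n-1}`. -/
theorem sum_hyperplane_counts_le (n : ℕ) (hn : 2 ≤ n) (r : ℝ) (hr : 1 ≤ r) :
    ∀ S : Finset (Submodule ℝ (Euc n)), ↑S = hyperSet n r →
      ∑ H ∈ S, hypLatCount n H r ≤
        S.card + ({x : Euc n | IsLatticePoint x ∧ ‖x‖ ≤ r}.ncard) ^ (n - 1) :=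
  sum_hyperplane_counts_le_general n hn r
end
end
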